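/- arXiv:2410.08158 — 2 statements merged into one kernel-verified Lean document; each statement's English description precedes it below -/
import Mathlib

section
/- If X ⊆ ℙ^M is an irreducible non-degenerate projective variety and σ_r(X) is not a linear space, then for any r ≥ 2 the singular locus of σ_r(X) contains σ_{r-1}(X). -/
/-!
STATEMENT 0: If X ⊆ ℙ^M is an irreducible non-degenerate projective variety and σ_r(X)
is not a linear space, then for any r ≥ 2 the singular locus of σ_r(X) contains σ_{r-1}(X).

We model a projective variety by its affine cone `X ⊆ ℂ^{M+1}`, which is Zariski closed
(`X = zariskiClosure X`), closed under scalar multiplication, irreducible (its vanishing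
ideal is prime), and non-degenerate (its linear span is everything).  The `r`-th secant
variety is modelled by its affine cone: the Zariski closure of the set of vectors lying in
the span of `r` points of `X`.  A nonzero point `x` of the cone is a singular point of the
projective variety when the Zariski tangent space at `x` (cut out by the differentials of
all polynomials in the vanishing ideal) has dimension strictly larger than the dimension of
the cone (the Krull dimension of its coordinate ring).
-/

open MvPolynomial

/-- Zariski closure of a subset of affine space `(σ → ℂ)`. -/
noncomputable def zariskiClosure {σ : Type*} (S : Set (σ → ℂ)) : Set (σ → ℂ) :=
  zeroLocus ℂ (vanishingIdeal ℂ S)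

/-- The affine cone over the `r`-th secant variety of the projective variety with affine
cone `X`. -/
noncomputable def secantCone {M : ℕ} (r : ℕ) (X : Set (Fin (M + 1) → ℂ)) :
    Set (Fin (M + 1) → ℂ) :=
  zariskiClosure {v | ∃ f : Fin r → (Fin (M + 1) → ℂ),
    (∀ i, f i ∈ X) ∧ v ∈ Submodule.span ℂ (Set.range f)}

/-- The Zariski tangent space at a point `x` of the affine set `S`: common kernel of the
differentials at `x` of all polynomials vanishing on `S`. -/
noncomputable def zariskiTangent {M : ℕ} (S : Set (Fin (M + 1) → ℂ))
    (x : Fin (M + 1) → ℂ) : Submodule ℂ (Fin (M + 1) → ℂ) where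
  carrier := {v | ∀ f ∈ vanishingIdeal ℂ S, ∑ i, v i * eval x (pderiv i f) = 0}
  add_mem' := by
    intro a b ha hb f hf
    have ha' := ha f hf
    have hb' := hb f hf
    simp only [Set.mem_setOf_eq, Pi.add_apply, add_mul, Finset.sum_add_distrib, ha', hb',
      add_zero]
  zero_mem' := by
    intro f hf
    simp
  smul_mem' := by
    intro c a ha f hf
    have ha' := ha f hf
    simp only [Set.mem_setOf_eq, Pi.smul_apply, smul_eq_mul, mul_assoc, ← Finset.mul_sum,
      ha', mul_zero]

/-- The coordinate ring `ℂ[x_0,…,x_M]/I(S)` of an affine set `S`. -/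
noncomputable abbrev coordRing {M : ℕ} (S : Set (Fin (M + 1) → ℂ)) : Type _ :=
  MvPolynomial (Fin (M + 1)) ℂ ⧸ vanishingIdeal ℂ S

/-- A nonzero point of the cone is a singular point of the corresponding projective
variety when the Zariski tangent space is bigger than the dimension. -/
noncomputable def IsSingularPoint {M : ℕ} (S : Set (Fin (M + 1) → ℂ))
    (x : Fin (M + 1) → ℂ) : Prop :=
  ringKrullDim (coordRing S) < (Module.finrank ℂ (zariskiTangent S x) : WithBot ℕ∞)

/-!
Terracini-type argument. If `f` vanishes on `σ_r(X)`, `w ∈ σ_{r-1}(X)` and `u ∈ X`, then the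
whole line `w + t u` lies in `σ_r(X)`, so the derivative of `f` at `w` in direction `u` vanishes.
This polynomial identity in `w` persists on the closure `σ_{r-1}(X)`; since `X` spans the
ambient space, the Zariski tangent space of `σ_r(X)` at any point of `σ_{r-1}(X)` is all of
`ℂ^{M+1}`. On the other hand `σ_r(X)` is not linear, hence a proper closed subset, so its
vanishing ideal contains a nonzero polynomial, which is a nonzerodivisor of `ℂ[x_0, …, x_M]`;
the coordinate ring therefore has dimension `< M + 1`.
-/

theorem ringKrullDim_quotient_add_one_le {R : Type*} [CommRing R] [IsDomain R] {I : Ideal R}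
    (hI : I ≠ ⊥) : ringKrullDim (R ⧸ I) + 1 ≤ ringKrullDim R := by
  obtain ⟨r, hrI, hr0⟩ := Submodule.exists_mem_ne_zero_of_ne_bot hI
  exact ringKrullDim_succ_le_of_surjective (Ideal.Quotient.mk I) Ideal.Quotient.mk_surjective
    (mem_nonZeroDivisors_of_ne_zero hr0) (Ideal.Quotient.eq_zero_iff_mem.mpr hrI)

theorem MvPolynomial.ringKrullDim_quotient_lt {K ι : Type*} [Field K] [Finite ι]
    {I : Ideal (MvPolynomial ι K)} (hI : I ≠ ⊥) :
    ringKrullDim (MvPolynomial ι K ⧸ I) < Nat.card ι := by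
  have h := ringKrullDim_quotient_add_one_le hI
  rw [MvPolynomial.ringKrullDim_of_isNoetherianRing, ringKrullDim_eq_zero_of_field,
    zero_add] at h
  exact ENat.WithBot.add_one_le_natCast_iff.mp h

theorem MvPolynomial.derivative_aeval_eq_sum_pderiv {R σ : Type*} [CommSemiring R] [Fintype σ]
    (L : σ → Polynomial R) (f : MvPolynomial σ R) :
    Polynomial.derivative (aeval L f) = ∑ i, aeval L (pderiv i f) * Polynomial.derivative (L i) := by
  classical
  induction f using MvPolynomial.induction_on with
  | C a => simp
  | add p q hp hq => simp only [map_add, hp, hq, add_mul, Finset.sum_add_distrib]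
  | mul_X p i hp =>
    simp only [map_mul, aeval_X, Polynomial.derivative_mul, hp, Derivation.leibniz, pderiv_X,
      smul_eq_mul, map_add, add_mul, Finset.sum_add_distrib, Finset.sum_mul, Pi.single_apply,
      apply_ite (aeval L), map_zero, mul_ite, mul_one, mul_zero, ite_mul, zero_mul,
      Finset.sum_ite_eq, Finset.mem_univ, if_true]
    rw [add_comm]
    congr 1
    exact Finset.sum_congr rfl fun j _ => by ring

theorem eval_add_smul_eq_eval_aeval {R σ : Type*} [CommRing R] (w u : σ → R)
    (f : MvPolynomial σ R) (t : R) :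
    eval (w + t • u) f =
      (aeval (fun i => Polynomial.C (w i) + Polynomial.C (u i) * Polynomial.X) f).eval t := by
  rw [← Polynomial.coe_aeval_eq_eval, comp_aeval_apply, ← MvPolynomial.coe_aeval_eq_eval]
  refine congrArg (fun v => aeval v f) (funext fun i => ?_)
  simp only [Pi.add_apply, Pi.smul_apply, smul_eq_mul, map_add, map_mul, Polynomial.aeval_C,
    Polynomial.aeval_X, Algebra.algebraMap_self, RingHom.id_apply]
  ring

theorem sum_mul_eval_pderiv_eq_zero_of_forall_eval_add_smul {R σ : Type*} [CommRing R] [IsDomain R] [Infinite R]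
    [Fintype σ] {f : MvPolynomial σ R} {w u : σ → R} (h : ∀ t : R, eval (w + t • u) f = 0) :
    ∑ i, u i * eval w (pderiv i f) = 0 := by
  set L : σ → Polynomial R := fun i => Polynomial.C (w i) + Polynomial.C (u i) * Polynomial.X
  have hline : aeval L f = 0 :=
    Polynomial.funext fun t => by rw [← eval_add_smul_eq_eval_aeval, h, Polynomial.eval_zero]
  have hderiv := congrArg (Polynomial.eval 0) (derivative_aeval_eq_sum_pderiv L f)
  rw [hline] at hderiv
  have hL : ∀ g : MvPolynomial σ R, (aeval L g).eval 0 = eval w g := fun g => by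
    rw [← eval_add_smul_eq_eval_aeval, zero_smul, add_zero]
  simp only [Polynomial.derivative_zero, Polynomial.eval_zero, Polynomial.eval_finsetSum,
    Polynomial.eval_mul, hL, L, Polynomial.derivative_add, Polynomial.derivative_C,
    Polynomial.derivative_C_mul_X, zero_add, Polynomial.eval_C] at hderiv
  simpa only [mul_comm] using hderiv.symm

theorem subset_zariskiClosure {σ : Type*} (S : Set (σ → ℂ)) : S ⊆ zariskiClosure S :=
  zeroLocus_vanishingIdeal_le (k := ℂ) S

theorem vanishingIdeal_zariskiClosure_ne_bot {σ : Type*} {S : Set (σ → ℂ)}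
    (hS : zariskiClosure S ≠ Set.univ) : vanishingIdeal ℂ (zariskiClosure S) ≠ ⊥ := by
  intro h
  refine hS (Set.eq_univ_of_forall fun x p hp => ?_)
  have hp0 : p ∈ (⊥ : Ideal _) := h ▸ le_vanishingIdeal_zeroLocus _ hp
  rw [Ideal.mem_bot.mp hp0, map_zero]

/-- `secantCone r X` is by definition the Zariski closure of this set. -/
def secantPoints {M : ℕ} (r : ℕ) (X : Set (Fin (M + 1) → ℂ)) : Set (Fin (M + 1) → ℂ) :=
  {v | ∃ f : Fin r → (Fin (M + 1) → ℂ), (∀ i, f i ∈ X) ∧ v ∈ Submodule.span ℂ (Set.range f)}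

theorem add_smul_mem_secantPoints_succ {M s : ℕ} {X : Set (Fin (M + 1) → ℂ)}
    {w u : Fin (M + 1) → ℂ} (hw : w ∈ secantPoints s X) (hu : u ∈ X) (t : ℂ) :
    w + t • u ∈ secantPoints (s + 1) X := by
  obtain ⟨p, hpX, hwp⟩ := hw
  refine ⟨Fin.snoc p u, Fin.lastCases (by simpa using hu) (fun j => by simpa using hpX j), ?_⟩
  have hp_le : Submodule.span ℂ (Set.range p) ≤
      Submodule.span ℂ (Set.range (Fin.snoc p u : Fin (s + 1) → _)) :=
    Submodule.span_mono (Set.range_subset_iff.mpr fun j => ⟨j.castSucc, Fin.snoc_castSucc ..⟩)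
  exact add_mem (hp_le hwp)
    (Submodule.smul_mem _ _ (Submodule.subset_span ⟨Fin.last s, Fin.snoc_last ..⟩))

theorem mem_zariskiTangent_secantCone_succ {M s : ℕ} {X : Set (Fin (M + 1) → ℂ)}
    {x u : Fin (M + 1) → ℂ} (hx : x ∈ secantCone s X) (hu : u ∈ X) :
    u ∈ zariskiTangent (secantCone (s + 1) X) x := by
  intro f hf
  let g : MvPolynomial (Fin (M + 1)) ℂ := ∑ i, C (u i) * pderiv i f
  have hg : g ∈ vanishingIdeal ℂ (secantPoints s X) := by
    refine mem_vanishingIdeal_iff.mpr fun w hw => ?_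
    have hline : ∀ t : ℂ, eval (w + t • u) f = 0 := fun t =>
      mem_vanishingIdeal_iff.mp hf _
        (subset_zariskiClosure _ (add_smul_mem_secantPoints_succ hw hu t))
    simpa [g] using sum_mul_eval_pderiv_eq_zero_of_forall_eval_add_smul hline
  simpa [g] using hx g hg

theorem zariskiTangent_secantCone_succ_eq_top {M s : ℕ} {X : Set (Fin (M + 1) → ℂ)}
    (hX : Submodule.span ℂ X = ⊤) {x : Fin (M + 1) → ℂ} (hx : x ∈ secantCone s X) :
    zariskiTangent (secantCone (s + 1) X) x = ⊤ := by
  rw [eq_top_iff, ← hX, Submodule.span_le]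
  exact fun u hu => mem_zariskiTangent_secantCone_succ hx hu

theorem sing_secant_contains_lower_secant_general (M r : ℕ) (hr : 2 ≤ r)
    (X : Set (Fin (M + 1) → ℂ))
    (hXnondeg : Submodule.span ℂ X = ⊤)
    (hXnotlin : ¬ ∃ W : Submodule ℂ (Fin (M + 1) → ℂ), secantCone r X = (W : Set _)) :
    ∀ x ∈ secantCone (r - 1) X, x ≠ 0 → IsSingularPoint (secantCone r X) x := by
  intro x hx _
  obtain ⟨s, rfl⟩ : ∃ s, r = s + 1 := ⟨r - 1, by omega⟩
  have hproper : secantCone (s + 1) X ≠ Set.univ := fun h =>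
    hXnotlin ⟨⊤, by rw [h, Submodule.top_coe]⟩
  have hdim := MvPolynomial.ringKrullDim_quotient_lt (vanishingIdeal_zariskiClosure_ne_bot hproper)
  rw [IsSingularPoint, zariskiTangent_secantCone_succ_eq_top hXnondeg (by simpa using hx),
    finrank_top, Module.finrank_fin_fun]
  rwa [Nat.card_eq_fintype_card, Fintype.card_fin] at hdim

/-- For an irreducible non-degenerate projective variety `X ⊆ ℙ^M` whose
`r`-th secant variety is not a linear space, and `r ≥ 2`, every point of `σ_{r-1}(X)` is a
singular point of `σ_r(X)`. -/
theorem sing_secant_contains_lower_secant (M r : ℕ) (hr : 2 ≤ r)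
    (X : Set (Fin (M + 1) → ℂ))
    (hXclosed : X = zariskiClosure X)
    (hXcone : ∀ c : ℂ, ∀ x ∈ X, c • x ∈ X)
    (hXirr : (vanishingIdeal ℂ X).IsPrime)
    (hXnondeg : Submodule.span ℂ X = ⊤)
    (hXnotlin : ¬ ∃ W : Submodule ℂ (Fin (M + 1) → ℂ), secantCone r X = (W : Set _)) :
    ∀ x ∈ secantCone (r - 1) X, x ≠ 0 → IsSingularPoint (secantCone r X) x :=
  sing_secant_contains_lower_secant_general M r hr X hXnondeg hXnotlin
end

section
/- For two points [V], [W] of the Lagrangian Grassmannian LG(N,2N), the Hamming distance between them (in the minimal embedding) equals N − dim(V ∩ W). -/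
/-!
STATEMENT 6: For two points `[V], [W]` of the Lagrangian Grassmannian `LG(N, 2N)`, the
Hamming distance between them in the minimal embedding equals `N − dim(V ∩ W)`.

A line of `ℙ(Λ^N ℂ^{2N})` through two distinct points of `LG(N,2N)` is fully contained in
`LG(N,2N)` exactly when the two Lagrangian subspaces meet in dimension `N − 1` (the pencil
of Lagrangians through a fixed `(N−1)`-dimensional isotropic subspace).  Hence the Hamming
distance is the least `r` such that there is a chain of `r + 1` Lagrangian subspaces from
`V` to `W` in which consecutive members meet in dimension at least `N − 1`.
-/

open LinearMap (BilinForm)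

variable {V₀ : Type*} [AddCommGroup V₀] [Module ℂ V₀]

/-- A Lagrangian subspace: `N`-dimensional and isotropic. -/
def IsLagrangian (ω : BilinForm ℂ V₀) (N : ℕ) (L : Submodule ℂ V₀) : Prop :=
  Module.finrank ℂ L = N ∧ L ≤ ω.orthogonal L

/-- Hamming distance between two points of `LG(N,2N)` in the minimal (Plücker) embedding:
minimal number of lines contained in `LG(N,2N)` joining them, i.e. minimal length of a
chain of Lagrangians in which consecutive members meet in codimension at most one. -/
noncomputable def lagrangianHammingDist (ω : BilinForm ℂ V₀) (N : ℕ)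
    (L L' : Submodule ℂ V₀) : ℕ :=
  sInf {r | ∃ c : Fin (r + 1) → Submodule ℂ V₀,
    (∀ i, IsLagrangian ω N (c i)) ∧ c 0 = L ∧ c (Fin.last r) = L' ∧
    ∀ i : Fin r, N - 1 ≤ Module.finrank ℂ (c i.castSucc ⊓ c i.succ : Submodule ℂ V₀)}

/-! For `N`-dimensional subspaces `A, B, C` one has `dim (A ⊓ C) ≥ dim (A ⊓ B) + dim (B ⊓ C) - N`,
so along a chain the intersection with the first member loses at most one dimension per step.
Conversely, if `v ∈ L' \ L`, then `L = Lᗮ` makes `H = L ⊓ vᗮ` a hyperplane of `L`, and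
`H ⊔ ℂ ∙ v` is a Lagrangian adjacent to `L` whose intersection with `L'` contains
`(L ⊓ L') ⊔ ℂ ∙ v`; iterating reaches `L'` in `N - dim (L ⊓ L')` steps. -/

open Module Submodule

theorem LinearMap.BilinForm.IsAlt.sup_span_singleton_le_orthogonal {R M : Type*} [CommRing R]
    [AddCommGroup M] [Module R M] {B : BilinForm R M} (hB : B.IsAlt) {H : Submodule R M} {v : M}
    (hH : H ≤ B.orthogonal H) (hv : ∀ x ∈ H, B v x = 0) :
    H ⊔ R ∙ v ≤ B.orthogonal (H ⊔ R ∙ v) := by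
  intro m hm
  rw [LinearMap.BilinForm.mem_orthogonal_iff]
  intro n hn
  obtain ⟨x, hx, _, hy, rfl⟩ := mem_sup.mp hm
  obtain ⟨x', hx', _, hy', rfl⟩ := mem_sup.mp hn
  obtain ⟨a, rfl⟩ := mem_span_singleton.mp hy
  obtain ⟨b, rfl⟩ := mem_span_singleton.mp hy'
  have hxx' : B x' x = 0 := hH hx x' hx'
  have hx'v : B x' v = 0 := hB.eq_iff.mp (hv x' hx')
  simp [hxx', hv x hx, hx'v, hB.self_eq_zero v]

section FiniteDimensional

variable {K V : Type*} [Field K] [AddCommGroup V] [Module K V] [FiniteDimensional K V]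

theorem Submodule.finrank_inf_ker_add_one {L : Submodule K V} {f : Module.Dual K V} {x : V}
    (hx : x ∈ L) (hfx : f x ≠ 0) :
    finrank K (L ⊓ LinearMap.ker f : Submodule K V) + 1 = finrank K L := by
  have hf : f.domRestrict L ≠ 0 := fun h ↦ hfx (by simpa using LinearMap.congr_fun h ⟨x, hx⟩)
  rw [← Module.Dual.finrank_ker_add_one_of_ne_zero hf, LinearMap.ker_domRestrict,
    ← map_comap_subtype, finrank_map_subtype_eq]

theorem Submodule.finrank_inf_add_finrank_inf_le (A B C : Submodule K V) :
    finrank K (A ⊓ B : Submodule K V) + finrank K (B ⊓ C : Submodule K V)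
      ≤ finrank K (A ⊓ C : Submodule K V) + finrank K B := by
  rw [← finrank_sup_add_finrank_inf_eq, add_comm]
  gcongr
  · exact finrank_mono (le_inf (inf_le_left.trans inf_le_left) (inf_le_right.trans inf_le_right))
  · exact finrank_mono (sup_le inf_le_right inf_le_left)

theorem Submodule.sub_le_finrank_inf_of_chain {N r : ℕ} {c : Fin (r + 1) → Submodule K V}
    (hc : ∀ i, finrank K (c i) = N)
    (hstep : ∀ i : Fin r, N - 1 ≤ finrank K (c i.castSucc ⊓ c i.succ : Submodule K V))
    (i : Fin (r + 1)) : N - i ≤ finrank K (c 0 ⊓ c i : Submodule K V) := by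
  induction i using Fin.induction with
  | zero => rw [inf_idem, hc 0]; omega
  | succ i ih =>
    have hmeet := finrank_inf_add_finrank_inf_le (c 0) (c i.castSucc) (c i.succ)
    have hadj := hstep i
    simp only [Fin.val_castSucc, Fin.val_succ, hc] at ih hmeet ⊢
    omega

end FiniteDimensional

section Lagrangian

variable {ω : BilinForm ℂ V₀} {N : ℕ}

def IsLagrangianChain (ω : BilinForm ℂ V₀) (N : ℕ) (L L' : Submodule ℂ V₀) (r : ℕ) : Prop :=
  ∃ c : Fin (r + 1) → Submodule ℂ V₀,
    (∀ i, IsLagrangian ω N (c i)) ∧ c 0 = L ∧ c (Fin.last r) = L' ∧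
    ∀ i : Fin r, N - 1 ≤ Module.finrank ℂ (c i.castSucc ⊓ c i.succ : Submodule ℂ V₀)

theorem lagrangianHammingDist_eq_sInf (L L' : Submodule ℂ V₀) :
    lagrangianHammingDist ω N L L' = sInf {r | IsLagrangianChain ω N L L' r} :=
  rfl

theorem IsLagrangianChain.refl {L : Submodule ℂ V₀} (hL : IsLagrangian ω N L) :
    IsLagrangianChain ω N L L 0 :=
  ⟨fun _ ↦ L, fun _ ↦ hL, rfl, rfl, Fin.elim0⟩

theorem IsLagrangianChain.cons {L L₁ L' : Submodule ℂ V₀} {r : ℕ} (hL : IsLagrangian ω N L)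
    (hstep : N - 1 ≤ finrank ℂ (L ⊓ L₁ : Submodule ℂ V₀)) (h : IsLagrangianChain ω N L₁ L' r) :
    IsLagrangianChain ω N L L' (r + 1) := by
  obtain ⟨c, hc, hc0, hclast, hcstep⟩ := h
  refine ⟨Fin.cons L c, Fin.cases hL hc, rfl, by rwa [← Fin.succ_last, Fin.cons_succ], ?_⟩
  intro i
  induction i using Fin.cases with
  | zero => rwa [Fin.castSucc_zero, Fin.cons_zero, Fin.cons_succ, hc0]
  | succ j => rw [← Fin.succ_castSucc, Fin.cons_succ, Fin.cons_succ]; exact hcstep j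

theorem IsLagrangianChain.sub_finrank_inf_le [FiniteDimensional ℂ V₀] {L L' : Submodule ℂ V₀}
    {r : ℕ} (h : IsLagrangianChain ω N L L' r) : N - finrank ℂ (L ⊓ L' : Submodule ℂ V₀) ≤ r := by
  obtain ⟨c, hc, rfl, rfl, hstep⟩ := h
  have := sub_le_finrank_inf_of_chain (fun i ↦ (hc i).1) hstep (Fin.last r)
  simp only [Fin.val_last] at this
  omega

theorem IsLagrangian.orthogonal_eq [FiniteDimensional ℂ V₀] (hV : finrank ℂ V₀ = 2 * N)
    (hnd : ω.Nondegenerate) {L : Submodule ℂ V₀} (hL : IsLagrangian ω N L) :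
    ω.orthogonal L = L := by
  refine (eq_of_le_of_finrank_le hL.2 ?_).symm
  rw [LinearMap.BilinForm.finrank_orthogonal hnd, hV, hL.1]
  omega

theorem IsLagrangian.exists_step [FiniteDimensional ℂ V₀] (hV : finrank ℂ V₀ = 2 * N)
    (halt : ω.IsAlt) (hnd : ω.Nondegenerate) {L L' : Submodule ℂ V₀} (hL : IsLagrangian ω N L)
    (hL' : IsLagrangian ω N L') {v : V₀} (hvL' : v ∈ L') (hvL : v ∉ L) :
    ∃ L₁, IsLagrangian ω N L₁ ∧ N - 1 ≤ finrank ℂ (L ⊓ L₁ : Submodule ℂ V₀) ∧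
      L ⊓ L' < L₁ ⊓ L' := by
  set H := L ⊓ LinearMap.ker (ω v)
  obtain ⟨x, hxL, hx⟩ : ∃ x ∈ L, ω v x ≠ 0 := by
    by_contra! h
    refine hvL (hL.orthogonal_eq hV hnd ▸ ?_)
    exact (LinearMap.BilinForm.mem_orthogonal_iff).mpr fun n hn ↦ halt.eq_iff.mp (h n hn)
  have hH : finrank ℂ H + 1 = N := hL.1 ▸ finrank_inf_ker_add_one hxL hx
  have hvH : v ∉ H := fun h ↦ hvL h.1
  have hHiso : H ≤ ω.orthogonal H :=
    inf_le_left.trans (hL.2.trans (LinearMap.BilinForm.orthogonal_le inf_le_left))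
  refine ⟨H ⊔ ℂ ∙ v, ⟨?_, halt.sup_span_singleton_le_orthogonal hHiso fun y hy ↦ hy.2⟩, ?_, ?_⟩
  · rw [finrank_sup_span_singleton hvH]
    omega
  · have := finrank_mono (le_inf inf_le_left le_sup_left : H ≤ L ⊓ (H ⊔ ℂ ∙ v))
    omega
  · have hLL' : L ⊓ L' ≤ H := le_inf inf_le_left fun y hy ↦ hL'.2 hy.2 v hvL'
    have hv : v ∈ (H ⊔ ℂ ∙ v) ⊓ L' := ⟨mem_sup_right (mem_span_singleton_self v), hvL'⟩
    exact SetLike.lt_iff_le_and_exists.mpr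
      ⟨le_inf (hLL'.trans le_sup_left) inf_le_right, v, hv, fun h ↦ hvL h.1⟩

theorem IsLagrangian.exists_chain_le [FiniteDimensional ℂ V₀] (hV : finrank ℂ V₀ = 2 * N)
    (halt : ω.IsAlt) (hnd : ω.Nondegenerate) {L L' : Submodule ℂ V₀} (hL : IsLagrangian ω N L)
    (hL' : IsLagrangian ω N L') :
    ∃ r ≤ N - finrank ℂ (L ⊓ L' : Submodule ℂ V₀), IsLagrangianChain ω N L L' r := by
  induction h : N - finrank ℂ (L ⊓ L' : Submodule ℂ V₀) using Nat.strong_induction_on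
    generalizing L with
  | _ k ih =>
  by_cases hle : L' ≤ L
  · obtain rfl : L' = L := eq_of_le_of_finrank_le hle (by rw [hL.1, hL'.1])
    exact ⟨0, k.zero_le, .refl hL'⟩
  obtain ⟨v, hvL', hvL⟩ := SetLike.not_le_iff_exists.mp hle
  obtain ⟨L₁, hL₁, hstep, hlt⟩ := hL.exists_step hV halt hnd hL' hvL' hvL
  have hgrow := finrank_lt_finrank_of_lt hlt
  have hbound : finrank ℂ (L₁ ⊓ L' : Submodule ℂ V₀) ≤ N := hL'.1 ▸ finrank_mono inf_le_right
  obtain ⟨r, hr, hchain⟩ := ih _ (by omega) hL₁ rfl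
  exact ⟨r + 1, by omega, hchain.cons hL hstep⟩

end Lagrangian

theorem lagrangian_hamming_eq (N : ℕ) [FiniteDimensional ℂ V₀]
    (hV : Module.finrank ℂ V₀ = 2 * N)
    (ω : BilinForm ℂ V₀) (halt : ω.IsAlt) (hnd : ω.Nondegenerate)
    (L L' : Submodule ℂ V₀) (hL : IsLagrangian ω N L) (hL' : IsLagrangian ω N L') :
    lagrangianHammingDist ω N L L'
      = N - Module.finrank ℂ (L ⊓ L' : Submodule ℂ V₀) := by
  obtain ⟨r, hr, hchain⟩ := hL.exists_chain_le hV halt hnd hL'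
  have hne : {r | IsLagrangianChain ω N L L' r}.Nonempty := ⟨r, hchain⟩
  rw [lagrangianHammingDist_eq_sInf]
  exact le_antisymm ((Nat.sInf_le hchain).trans hr)
    (IsLagrangianChain.sub_finrank_inf_le (Nat.sInf_mem hne))
end
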